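/- arXiv:2408.04753 — 2 statements merged into one kernel-verified Lean document; each statement's English description precedes it below -/
import Mathlib

section
/- Let n ≥ 2, let L ⊆ [n], and let i < j < k be elements of [n] \ L. (Weak raising flip) If S is a weakly separated collection of subsets of [n] containing Lj together with its four witnesses Li, Lk, Lij, Ljk, then (S \ {Lj}) ∪ {Lik} is weakly separated. (Weak lowering flip) If S is a weakly separated collection containing Lik together with Li, Lk, Lij, Ljk, then (S \ {Lik}) ∪ {Lj} is weakly separated. -/
/-- `allLt A B` means every element of `A` is smaller than every element of `B`
(vacuously true if `A` or `B` is empty). -/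
def allLt (A B : Finset ℕ) : Prop := ∀ a ∈ A, ∀ b ∈ B, a < b

/-- Leclerc–Zelevinsky weak separation of two finite sets of integers. -/
def WeaklySeparated (I J : Finset ℕ) : Prop :=
  (J.card ≤ I.card ∧ ∃ J' J'' : Finset ℕ, Disjoint J' J'' ∧ J' ∪ J'' = J \ I ∧
      allLt J' (I \ J) ∧ allLt (I \ J) J'') ∨
  (I.card ≤ J.card ∧ ∃ I' I'' : Finset ℕ, Disjoint I' I'' ∧ I' ∪ I'' = I \ J ∧
      allLt I' (J \ I) ∧ allLt (J \ I) I'')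

/-- A collection of subsets is weakly separated if its members are pairwise weakly separated. -/
def WSColl (S : Set (Finset ℕ)) : Prop := ∀ I ∈ S, ∀ J ∈ S, WeaklySeparated I J

def NoMid (A B : Finset ℕ) : Prop := ∀ a ∈ A, ∀ b ∈ B, ∀ c ∈ A, a < b → b < c → False

lemma split_iff (I J : Finset ℕ) :
    (∃ J' J'' : Finset ℕ, Disjoint J' J'' ∧ J' ∪ J'' = J \ I ∧
      allLt J' (I \ J) ∧ allLt (I \ J) J'') ↔ NoMid (I \ J) (J \ I) := by
  constructor
  · rintro ⟨J', J'', -, hU, h1, h2⟩ a ha b hb c hc hab hbc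
    rw [← hU] at hb
    rcases Finset.mem_union.1 hb with hb | hb
    · exact absurd (h1 b hb a ha) (by omega)
    · exact absurd (h2 c hc b hb) (by omega)
  · intro h
    classical
    refine ⟨(J \ I).filter (fun b => ∀ a ∈ I \ J, b < a),
      (J \ I).filter (fun b => ¬ ∀ a ∈ I \ J, b < a), ?_, ?_, ?_, ?_⟩
    · rw [Finset.disjoint_left]
      intro b h1 h2
      exact (Finset.mem_filter.1 h2).2 (Finset.mem_filter.1 h1).2
    · exact Finset.filter_union_filter_not_eq _ _
    · intro b hb a ha
      exact (Finset.mem_filter.1 hb).2 a ha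
    · intro a ha b hb
      obtain ⟨hbJI, hb2⟩ := Finset.mem_filter.1 hb
      push_neg at hb2
      obtain ⟨a₁, ha₁, hle⟩ := hb2
      have hne : a₁ ≠ b := by
        intro e; subst e
        exact (Finset.mem_sdiff.1 hbJI).2 (Finset.mem_sdiff.1 ha₁).1
      have h1 : a₁ < b := by omega
      by_contra hab
      have hne2 : b ≠ a := by
        intro e; subst e
        exact (Finset.mem_sdiff.1 hbJI).2 (Finset.mem_sdiff.1 ha).1
      exact h a₁ ha₁ b hbJI a ha h1 (by omega)

lemma ws_iff (I J : Finset ℕ) : WeaklySeparated I J ↔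
    (J.card ≤ I.card ∧ NoMid (I \ J) (J \ I)) ∨
    (I.card ≤ J.card ∧ NoMid (J \ I) (I \ J)) := by
  unfold WeaklySeparated
  rw [split_iff I J, split_iff J I]

lemma ws_symm {I J : Finset ℕ} (h : WeaklySeparated I J) : WeaklySeparated J I :=
  h.elim .inr .inl

lemma ws_refl (I : Finset ℕ) : WeaklySeparated I I := by
  rw [ws_iff]
  exact Or.inl ⟨le_refl _, by simp [NoMid]⟩

lemma memD1 {M L : Finset ℕ} {x t : ℕ} : t ∈ M \ (L ∪ {x}) ↔ t ∈ M ∧ t ∉ L ∧ t ≠ x := by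
  simp [Finset.mem_sdiff, Finset.mem_union, not_or]
  tauto

lemma memD2 {M L : Finset ℕ} {x y t : ℕ} :
    t ∈ M \ (L ∪ {x, y}) ↔ t ∈ M ∧ t ∉ L ∧ t ≠ x ∧ t ≠ y := by
  simp [Finset.mem_sdiff, Finset.mem_union, not_or]
  tauto

lemma memU1 {M L : Finset ℕ} {x t : ℕ} : t ∈ (L ∪ {x}) \ M ↔ (t ∈ L ∨ t = x) ∧ t ∉ M := by
  simp [Finset.mem_sdiff, Finset.mem_union]
  tauto

lemma memU2 {M L : Finset ℕ} {x y t : ℕ} :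
    t ∈ (L ∪ {x, y}) \ M ↔ (t ∈ L ∨ t = x ∨ t = y) ∧ t ∉ M := by
  simp [Finset.mem_sdiff, Finset.mem_union]
  tauto

lemma card1 {L : Finset ℕ} {x : ℕ} (h : x ∉ L) : (L ∪ {x}).card = L.card + 1 := by
  rw [Finset.union_comm, show ({x} : Finset ℕ) ∪ L = insert x L from rfl, Finset.card_insert_of_notMem h]

lemma card2 {L : Finset ℕ} {x y : ℕ} (hx : x ∉ L) (hy : y ∉ L) (hxy : x ≠ y) :
    (L ∪ {x, y}).card = L.card + 2 := by
  rw [show ({x, y} : Finset ℕ) = insert x {y} from rfl, Finset.union_insert,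
    Finset.card_insert_of_notMem (by simp [hx, hxy]), card1 hy]

lemma card_balance (M L : Finset ℕ) : (M \ L).card + L.card = (L \ M).card + M.card := by
  rw [Finset.card_sdiff_add_card, Finset.card_sdiff_add_card, Finset.union_comm]

/-- If `j ∉ M` lies strictly between two elements of `M \ (L ∪ {i,j})`, contradiction
(high-cardinality case). -/
lemma P_ij (L : Finset ℕ) (i j : ℕ) (M : Finset ℕ)
    (hiL : i ∉ L) (hjL : j ∉ L) (hij : i < j)
    (hcard : L.card + 2 ≤ M.card)
    (Hi : NoMid (M \ (L ∪ {i})) ((L ∪ {i}) \ M))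
    (Hij : WeaklySeparated M (L ∪ {i, j}))
    (hjM : j ∉ M) (a a' : ℕ)
    (ha : a ∈ M \ (L ∪ {i, j})) (ha' : a' ∈ M \ (L ∪ {i, j}))
    (h1 : a < j) (h2 : j < a') : False := by
  obtain ⟨haM, haL, hai, haj⟩ := memD2.1 ha
  obtain ⟨ha'M, ha'L, ha'i, ha'j⟩ := memD2.1 ha'
  have hjmem : j ∈ (L ∪ {i, j}) \ M := memU2.2 ⟨Or.inr (Or.inr rfl), hjM⟩
  have haMi : a ∈ M \ (L ∪ {i}) := memD1.2 ⟨haM, haL, hai⟩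
  have ha'Mi : a' ∈ M \ (L ∪ {i}) := memD1.2 ⟨ha'M, ha'L, ha'i⟩
  rcases (ws_iff _ _).1 Hij with ⟨hc, H⟩ | ⟨hc, H⟩
  · exact H a ha j hjmem a' ha' h1 h2
  · have hcij : (L ∪ {i, j}).card = L.card + 2 := card2 hiL hjL (by omega)
    -- every element of (L∪{i,j})\M lies strictly between a and a'
    have key : ∀ b ∈ (L ∪ {i, j}) \ M, a < b ∧ b < a' := by
      intro b hb
      have hbM : b ∉ M := (memU2.1 hb).2
      constructor
      · by_contra hcon
        have : b < a := by
          rcases Nat.lt_or_ge b a with h | h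
          · exact h
          · exact absurd (le_antisymm (by omega) h ▸ haM) hbM
        exact H b hb a (memD2.2 ⟨haM, haL, hai, haj⟩) j hjmem this h1
      · by_contra hcon
        have : a' < b := by
          rcases Nat.lt_or_ge a' b with h | h
          · exact h
          · exact absurd (le_antisymm (by omega) h ▸ ha'M) hbM
        exact H j hjmem a' (memD2.2 ⟨ha'M, ha'L, ha'i, ha'j⟩) b hb h2 this
    -- L ⊆ M
    have hLM : ∀ y ∈ L, y ∈ M := by
      intro y hy
      by_contra hyM
      obtain ⟨hy1, hy2⟩ := key y (memU2.2 ⟨Or.inl hy, hyM⟩)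
      exact Hi a haMi y (memU1.2 ⟨Or.inl hy, hyM⟩) a' ha'Mi hy1 hy2
    have hq : (L \ M).card = 0 := by
      rw [Finset.card_eq_zero, Finset.eq_empty_iff_forall_notMem]
      intro y hy
      obtain ⟨h1', h2'⟩ := Finset.mem_sdiff.1 hy
      exact h2' (hLM y h1')
    have hbal := card_balance M L
    have hp : (M \ L).card = 2 := by omega
    have haa' : a ≠ a' := by omega
    have hsub : ({a, a'} : Finset ℕ) ⊆ M \ L := by
      intro t ht
      rcases Finset.mem_insert.1 ht with h | h
      · subst h; exact Finset.mem_sdiff.2 ⟨haM, haL⟩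
      · rw [Finset.mem_singleton.1 h]; exact Finset.mem_sdiff.2 ⟨ha'M, ha'L⟩
    have heq : ({a, a'} : Finset ℕ) = M \ L :=
      Finset.eq_of_subset_of_card_le hsub (by rw [hp, Finset.card_pair haa'])
    have hiM : i ∉ M := by
      intro hiMm
      have : i ∈ ({a, a'} : Finset ℕ) := heq ▸ Finset.mem_sdiff.2 ⟨hiMm, hiL⟩
      rcases Finset.mem_insert.1 this with h | h
      · exact hai h.symm
      · exact ha'i (Finset.mem_singleton.1 h).symm
    obtain ⟨hi1, hi2⟩ := key i (memU2.2 ⟨Or.inr (Or.inl rfl), hiM⟩)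
    exact Hi a haMi i (memU1.2 ⟨Or.inr rfl, hiM⟩) a' ha'Mi hi1 hi2

/-- Mirror of `P_ij` with the pair `{j,k}`, `j < k`. -/
lemma P_jk (L : Finset ℕ) (j k : ℕ) (M : Finset ℕ)
    (hjL : j ∉ L) (hkL : k ∉ L) (hjk : j < k)
    (hcard : L.card + 2 ≤ M.card)
    (Hk : NoMid (M \ (L ∪ {k})) ((L ∪ {k}) \ M))
    (Hjk : WeaklySeparated M (L ∪ {j, k}))
    (hjM : j ∉ M) (a a' : ℕ)
    (ha : a ∈ M \ (L ∪ {j, k})) (ha' : a' ∈ M \ (L ∪ {j, k}))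
    (h1 : a < j) (h2 : j < a') : False := by
  obtain ⟨haM, haL, haj, hak⟩ := memD2.1 ha
  obtain ⟨ha'M, ha'L, ha'j, ha'k⟩ := memD2.1 ha'
  have hjmem : j ∈ (L ∪ {j, k}) \ M := memU2.2 ⟨Or.inr (Or.inl rfl), hjM⟩
  have haMk : a ∈ M \ (L ∪ {k}) := memD1.2 ⟨haM, haL, hak⟩
  have ha'Mk : a' ∈ M \ (L ∪ {k}) := memD1.2 ⟨ha'M, ha'L, ha'k⟩
  rcases (ws_iff _ _).1 Hjk with ⟨hc, H⟩ | ⟨hc, H⟩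
  · exact H a ha j hjmem a' ha' h1 h2
  · have hcjk : (L ∪ {j, k}).card = L.card + 2 := card2 hjL hkL (by omega)
    have key : ∀ b ∈ (L ∪ {j, k}) \ M, a < b ∧ b < a' := by
      intro b hb
      have hbM : b ∉ M := (memU2.1 hb).2
      constructor
      · by_contra hcon
        have : b < a := by
          rcases Nat.lt_or_ge b a with h | h
          · exact h
          · exact absurd (le_antisymm (by omega) h ▸ haM) hbM
        exact H b hb a (memD2.2 ⟨haM, haL, haj, hak⟩) j hjmem this h1
      · by_contra hcon
        have : a' < b := by
          rcases Nat.lt_or_ge a' b with h | h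
          · exact h
          · exact absurd (le_antisymm (by omega) h ▸ ha'M) hbM
        exact H j hjmem a' (memD2.2 ⟨ha'M, ha'L, ha'j, ha'k⟩) b hb h2 this
    have hLM : ∀ y ∈ L, y ∈ M := by
      intro y hy
      by_contra hyM
      obtain ⟨hy1, hy2⟩ := key y (memU2.2 ⟨Or.inl hy, hyM⟩)
      exact Hk a haMk y (memU1.2 ⟨Or.inl hy, hyM⟩) a' ha'Mk hy1 hy2
    have hq : (L \ M).card = 0 := by
      rw [Finset.card_eq_zero, Finset.eq_empty_iff_forall_notMem]
      intro y hy
      obtain ⟨h1', h2'⟩ := Finset.mem_sdiff.1 hy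
      exact h2' (hLM y h1')
    have hbal := card_balance M L
    have hp : (M \ L).card = 2 := by omega
    have haa' : a ≠ a' := by omega
    have hsub : ({a, a'} : Finset ℕ) ⊆ M \ L := by
      intro t ht
      rcases Finset.mem_insert.1 ht with h | h
      · subst h; exact Finset.mem_sdiff.2 ⟨haM, haL⟩
      · rw [Finset.mem_singleton.1 h]; exact Finset.mem_sdiff.2 ⟨ha'M, ha'L⟩
    have heq : ({a, a'} : Finset ℕ) = M \ L :=
      Finset.eq_of_subset_of_card_le hsub (by rw [hp, Finset.card_pair haa'])
    have hkM : k ∉ M := by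
      intro hkMm
      have : k ∈ ({a, a'} : Finset ℕ) := heq ▸ Finset.mem_sdiff.2 ⟨hkMm, hkL⟩
      rcases Finset.mem_insert.1 this with h | h
      · exact hak h.symm
      · exact ha'k (Finset.mem_singleton.1 h).symm
    obtain ⟨hk1, hk2⟩ := key k (memU2.2 ⟨Or.inr (Or.inr rfl), hkM⟩)
    exact Hk a haMk k (memU1.2 ⟨Or.inr rfl, hkM⟩) a' ha'Mk hk1 hk2

/-- If `j ∈ M` lies strictly between two elements of `(L ∪ {i}) \ M`, contradiction
(low-cardinality case). -/
lemma Q_i (L : Finset ℕ) (i j : ℕ) (M : Finset ℕ)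
    (hiL : i ∉ L) (hjL : j ∉ L) (hij : i < j)
    (hcard : M.card ≤ L.card + 1)
    (Gij : NoMid ((L ∪ {i, j}) \ M) (M \ (L ∪ {i, j})))
    (Hi' : WeaklySeparated M (L ∪ {i}))
    (hjM : j ∈ M) (b b' : ℕ)
    (hb : b ∈ (L ∪ {i}) \ M) (hb' : b' ∈ (L ∪ {i}) \ M)
    (h1 : b < j) (h2 : j < b') : False := by
  obtain ⟨hbL, hbM⟩ := memU1.1 hb
  obtain ⟨hb'L, hb'M⟩ := memU1.1 hb'
  have hjmem : j ∈ M \ (L ∪ {i}) := memD1.2 ⟨hjM, hjL, by omega⟩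
  have hbij : b ∈ (L ∪ {i, j}) \ M := memU2.2 ⟨by tauto, hbM⟩
  have hb'ij : b' ∈ (L ∪ {i, j}) \ M := memU2.2 ⟨by tauto, hb'M⟩
  rcases (ws_iff _ _).1 Hi' with ⟨hc, H⟩ | ⟨hc, H⟩
  · -- first form; here M.card = L.card + 1
    have hci : (L ∪ {i}).card = L.card + 1 := card1 hiL
    -- every element of M \ (L∪{i}) lies strictly between b and b'
    have key : ∀ t ∈ M \ (L ∪ {i}), b < t ∧ t < b' := by
      intro t ht
      have htM : t ∈ M := (memD1.1 ht).1
      constructor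
      · by_contra hcon
        have : t < b := by
          rcases Nat.lt_or_ge t b with h | h
          · exact h
          · exact absurd (le_antisymm (by omega) h ▸ htM) hbM
        exact H t ht b hb j hjmem this h1
      · by_contra hcon
        have : b' < t := by
          rcases Nat.lt_or_ge b' t with h | h
          · exact h
          · exact absurd (le_antisymm h (by omega) ▸ htM) hb'M
        exact H j hjmem b' hb' t ht h2 this
    -- M \ (L ∪ {i}) ⊆ {j}
    have hsubj : ∀ t ∈ M \ (L ∪ {i}), t = j := by
      intro t ht
      by_contra htj
      obtain ⟨ht1, ht2⟩ := key t ht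
      obtain ⟨htM, htL, hti⟩ := memD1.1 ht
      exact Gij b hbij t (memD2.2 ⟨htM, htL, hti, htj⟩) b' hb'ij ht1 ht2
    -- M \ L ⊆ {i, j}
    have hsubij : ∀ t ∈ M \ L, t = i ∨ t = j := by
      intro t ht
      obtain ⟨htM, htL⟩ := Finset.mem_sdiff.1 ht
      by_cases hti : t = i
      · exact Or.inl hti
      · exact Or.inr (hsubj t (memD1.2 ⟨htM, htL, hti⟩))
    have hbal := card_balance M L
    by_cases hiM : i ∈ M
    · -- b, b' ∈ L \ M, distinct, so (L\M).card ≥ 2; but (M\L).card ≤ 2 gives contradiction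
      have hbL' : b ∈ L := by rcases hbL with h | h; exacts [h, absurd hiM (h ▸ hbM)]
      have hb'L' : b' ∈ L := by rcases hb'L with h | h; exacts [h, absurd hiM (h ▸ hb'M)]
      have hq2 : 2 ≤ (L \ M).card := by
        have : ({b, b'} : Finset ℕ) ⊆ L \ M := by
          intro t ht
          rcases Finset.mem_insert.1 ht with h | h
          · subst h; exact Finset.mem_sdiff.2 ⟨hbL', hbM⟩
          · rw [Finset.mem_singleton.1 h]; exact Finset.mem_sdiff.2 ⟨hb'L', hb'M⟩
        calc 2 = ({b, b'} : Finset ℕ).card := (Finset.card_pair (by omega)).symm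
          _ ≤ (L \ M).card := Finset.card_le_card this
      have hp2 : (M \ L).card ≤ 2 := by
        have : M \ L ⊆ ({i, j} : Finset ℕ) := by
          intro t ht
          rcases hsubij t ht with h | h <;> simp [h]
        calc (M \ L).card ≤ ({i, j} : Finset ℕ).card := Finset.card_le_card this
          _ = 2 := Finset.card_pair (by omega)
      omega
    · -- i ∉ M: then M \ L ⊆ {j}, so (M\L).card ≤ 1, q = 0, b = b' = i, contradiction
      have hp1 : (M \ L).card ≤ 1 := by
        have : M \ L ⊆ ({j} : Finset ℕ) := by
          intro t ht
          rcases hsubij t ht with h | h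
          · exact absurd (h ▸ (Finset.mem_sdiff.1 ht).1) hiM
          · simp [h]
        calc (M \ L).card ≤ ({j} : Finset ℕ).card := Finset.card_le_card this
          _ = 1 := Finset.card_singleton j
      have hq0 : (L \ M).card = 0 := by omega
      have hbi : b = i := by
        rcases hbL with h | h
        · exact absurd (Finset.mem_sdiff.2 ⟨h, hbM⟩)
            (by rw [Finset.card_eq_zero] at hq0; simp [hq0])
        · exact h
      have hb'i : b' = i := by
        rcases hb'L with h | h
        · exact absurd (Finset.mem_sdiff.2 ⟨h, hb'M⟩)
            (by rw [Finset.card_eq_zero] at hq0; simp [hq0])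
        · exact h
      omega
  · exact H b hb j hjmem b' hb' h1 h2

/-- Mirror of `Q_i` with the singleton `{k}`, `j < k`. -/
lemma Q_k (L : Finset ℕ) (j k : ℕ) (M : Finset ℕ)
    (hjL : j ∉ L) (hkL : k ∉ L) (hjk : j < k)
    (hcard : M.card ≤ L.card + 1)
    (Gjk : NoMid ((L ∪ {j, k}) \ M) (M \ (L ∪ {j, k})))
    (Hk' : WeaklySeparated M (L ∪ {k}))
    (hjM : j ∈ M) (b b' : ℕ)
    (hb : b ∈ (L ∪ {k}) \ M) (hb' : b' ∈ (L ∪ {k}) \ M)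
    (h1 : b < j) (h2 : j < b') : False := by
  obtain ⟨hbL, hbM⟩ := memU1.1 hb
  obtain ⟨hb'L, hb'M⟩ := memU1.1 hb'
  have hjmem : j ∈ M \ (L ∪ {k}) := memD1.2 ⟨hjM, hjL, by omega⟩
  have hbjk : b ∈ (L ∪ {j, k}) \ M := memU2.2 ⟨by tauto, hbM⟩
  have hb'jk : b' ∈ (L ∪ {j, k}) \ M := memU2.2 ⟨by tauto, hb'M⟩
  rcases (ws_iff _ _).1 Hk' with ⟨hc, H⟩ | ⟨hc, H⟩
  · have hck : (L ∪ {k}).card = L.card + 1 := card1 hkL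
    have key : ∀ t ∈ M \ (L ∪ {k}), b < t ∧ t < b' := by
      intro t ht
      have htM : t ∈ M := (memD1.1 ht).1
      constructor
      · by_contra hcon
        have : t < b := by
          rcases Nat.lt_or_ge t b with h | h
          · exact h
          · exact absurd (le_antisymm (by omega) h ▸ htM) hbM
        exact H t ht b hb j hjmem this h1
      · by_contra hcon
        have : b' < t := by
          rcases Nat.lt_or_ge b' t with h | h
          · exact h
          · exact absurd (le_antisymm h (by omega) ▸ htM) hb'M
        exact H j hjmem b' hb' t ht h2 this
    have hsubj : ∀ t ∈ M \ (L ∪ {k}), t = j := by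
      intro t ht
      by_contra htj
      obtain ⟨ht1, ht2⟩ := key t ht
      obtain ⟨htM, htL, htk⟩ := memD1.1 ht
      exact Gjk b hbjk t (memD2.2 ⟨htM, htL, htj, htk⟩) b' hb'jk ht1 ht2
    have hsubij : ∀ t ∈ M \ L, t = k ∨ t = j := by
      intro t ht
      obtain ⟨htM, htL⟩ := Finset.mem_sdiff.1 ht
      by_cases htk : t = k
      · exact Or.inl htk
      · exact Or.inr (hsubj t (memD1.2 ⟨htM, htL, htk⟩))
    have hbal := card_balance M L
    by_cases hkM : k ∈ M
    · have hbL' : b ∈ L := by rcases hbL with h | h; exacts [h, absurd hkM (h ▸ hbM)]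
      have hb'L' : b' ∈ L := by rcases hb'L with h | h; exacts [h, absurd hkM (h ▸ hb'M)]
      have hq2 : 2 ≤ (L \ M).card := by
        have : ({b, b'} : Finset ℕ) ⊆ L \ M := by
          intro t ht
          rcases Finset.mem_insert.1 ht with h | h
          · subst h; exact Finset.mem_sdiff.2 ⟨hbL', hbM⟩
          · rw [Finset.mem_singleton.1 h]; exact Finset.mem_sdiff.2 ⟨hb'L', hb'M⟩
        calc 2 = ({b, b'} : Finset ℕ).card := (Finset.card_pair (by omega)).symm
          _ ≤ (L \ M).card := Finset.card_le_card this
      have hp2 : (M \ L).card ≤ 2 := by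
        have : M \ L ⊆ ({k, j} : Finset ℕ) := by
          intro t ht
          rcases hsubij t ht with h | h <;> simp [h]
        calc (M \ L).card ≤ ({k, j} : Finset ℕ).card := Finset.card_le_card this
          _ = 2 := Finset.card_pair (by omega)
      omega
    · have hp1 : (M \ L).card ≤ 1 := by
        have : M \ L ⊆ ({j} : Finset ℕ) := by
          intro t ht
          rcases hsubij t ht with h | h
          · exact absurd (h ▸ (Finset.mem_sdiff.1 ht).1) hkM
          · simp [h]
        calc (M \ L).card ≤ ({j} : Finset ℕ).card := Finset.card_le_card this
          _ = 1 := Finset.card_singleton j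
      have hq0 : (L \ M).card = 0 := by omega
      have hbi : b = k := by
        rcases hbL with h | h
        · exact absurd (Finset.mem_sdiff.2 ⟨h, hbM⟩)
            (by rw [Finset.card_eq_zero] at hq0; simp [hq0])
        · exact h
      have hb'i : b' = k := by
        rcases hb'L with h | h
        · exact absurd (Finset.mem_sdiff.2 ⟨h, hb'M⟩)
            (by rw [Finset.card_eq_zero] at hq0; simp [hq0])
        · exact h
      omega
  · exact H b hb j hjmem b' hb' h1 h2

lemma key_raising (L : Finset ℕ) (i j k : ℕ) (M : Finset ℕ)
    (hiL : i ∉ L) (hjL : j ∉ L) (hkL : k ∉ L) (hij : i < j) (hjk : j < k)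
    (hMne : M ≠ L ∪ {j})
    (h1 : WeaklySeparated M (L ∪ {i})) (h2 : WeaklySeparated M (L ∪ {k}))
    (h3 : WeaklySeparated M (L ∪ {i, j})) (h4 : WeaklySeparated M (L ∪ {j, k}))
    (h5 : WeaklySeparated M (L ∪ {j})) :
    WeaklySeparated M (L ∪ {i, k}) := by
  have hcik : (L ∪ {i, k}).card = L.card + 2 := card2 hiL hkL (by omega)
  have hci : (L ∪ {i}).card = L.card + 1 := card1 hiL
  have hck : (L ∪ {k}).card = L.card + 1 := card1 hkL
  have hcij : (L ∪ {i, j}).card = L.card + 2 := card2 hiL hjL (by omega)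
  have hcjk : (L ∪ {j, k}).card = L.card + 2 := card2 hjL hkL (by omega)
  rw [ws_iff]
  by_cases hm : L.card + 2 ≤ M.card
  · left
    refine ⟨by omega, ?_⟩
    have Hi : NoMid (M \ (L ∪ {i})) ((L ∪ {i}) \ M) := by
      rcases (ws_iff _ _).1 h1 with ⟨hc, H⟩ | ⟨hc, H⟩
      · exact H
      · omega
    have Hk : NoMid (M \ (L ∪ {k})) ((L ∪ {k}) \ M) := by
      rcases (ws_iff _ _).1 h2 with ⟨hc, H⟩ | ⟨hc, H⟩
      · exact H
      · omega
    intro a ha b hb a' ha' hab hba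
    obtain ⟨haM, haL, hai, hak⟩ := memD2.1 ha
    obtain ⟨ha'M, ha'L, ha'i, ha'k⟩ := memD2.1 ha'
    obtain ⟨hbmem, hbM⟩ := memU2.1 hb
    rcases hbmem with hbL | hbi | hbk
    · exact Hi a (memD1.2 ⟨haM, haL, hai⟩) b (memU1.2 ⟨Or.inl hbL, hbM⟩)
        a' (memD1.2 ⟨ha'M, ha'L, ha'i⟩) hab hba
    · exact Hi a (memD1.2 ⟨haM, haL, hai⟩) b (memU1.2 ⟨Or.inr hbi, hbM⟩)
        a' (memD1.2 ⟨ha'M, ha'L, ha'i⟩) hab hba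
    · exact Hk a (memD1.2 ⟨haM, haL, hak⟩) b (memU1.2 ⟨Or.inr hbk, hbM⟩)
        a' (memD1.2 ⟨ha'M, ha'L, ha'k⟩) hab hba
  · right
    refine ⟨by omega, ?_⟩
    have Gij : NoMid ((L ∪ {i, j}) \ M) (M \ (L ∪ {i, j})) := by
      rcases (ws_iff _ _).1 h3 with ⟨hc, H⟩ | ⟨hc, H⟩
      · omega
      · exact H
    have Gjk : NoMid ((L ∪ {j, k}) \ M) (M \ (L ∪ {j, k})) := by
      rcases (ws_iff _ _).1 h4 with ⟨hc, H⟩ | ⟨hc, H⟩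
      · omega
      · exact H
    intro b hb t ht b' hb' hbt htb'
    obtain ⟨hbmem, hbM⟩ := memU2.1 hb
    obtain ⟨hb'mem, hb'M⟩ := memU2.1 hb'
    obtain ⟨htM, htL, hti, htk⟩ := memD2.1 ht
    by_cases htj : t = j
    · -- t = j ∈ M
      have hjM : j ∈ M := htj ▸ htM
      have hbj : b < j := by omega
      have hjb' : j < b' := by omega
      by_cases hb'k : b' = k
      · by_cases hbi : b = i
        · -- hardest subcase: b = i, b' = k, j ∈ M
          by_cases hLM : ∀ y ∈ L, y ∈ M
          · by_cases hMX : ∀ u ∈ M, u ∈ L ∨ u = j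
            · apply hMne
              apply Finset.Subset.antisymm
              · intro u hu
                rcases hMX u hu with h | h
                · exact Finset.mem_union_left _ h
                · exact Finset.mem_union_right _ (Finset.mem_singleton.2 h)
              · exact Finset.union_subset (fun u hu => hLM u hu)
                  (fun u hu => (Finset.mem_singleton.1 hu) ▸ hjM)
            · push_neg at hMX
              obtain ⟨u, huM, huX⟩ := hMX
              obtain ⟨huL, huj⟩ := huX
              have hq0 : (L \ M).card = 0 := by
                rw [Finset.card_eq_zero, Finset.eq_empty_iff_forall_notMem]
                intro y hy
                obtain ⟨hy1, hy2⟩ := Finset.mem_sdiff.1 hy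
                exact hy2 (hLM y hy1)
              have hp2 : 2 ≤ (M \ L).card := by
                have hsub : ({u, j} : Finset ℕ) ⊆ M \ L := by
                  intro v hv
                  rcases Finset.mem_insert.1 hv with h | h
                  · subst h; exact Finset.mem_sdiff.2 ⟨huM, huL⟩
                  · rw [Finset.mem_singleton.1 h]; exact Finset.mem_sdiff.2 ⟨hjM, hjL⟩
                calc 2 = ({u, j} : Finset ℕ).card := (Finset.card_pair huj).symm
                  _ ≤ (M \ L).card := Finset.card_le_card hsub
              have hbal := card_balance M L
              omega
          · push_neg at hLM
            obtain ⟨y, hyL, hyM⟩ := hLM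
            have hyj : y ≠ j := fun h => hjL (h ▸ hyL)
            rcases Nat.lt_or_ge y j with hyj' | hyj'
            · exact Q_k L j k M hjL hkL hjk (by omega) Gjk h2 hjM y k
                (memU1.2 ⟨Or.inl hyL, hyM⟩)
                (memU1.2 ⟨Or.inr rfl, hb'k ▸ hb'M⟩) hyj' hjk
            · have hjy : j < y := by omega
              exact Q_i L i j M hiL hjL hij (by omega) Gij h1 hjM i y
                (memU1.2 ⟨Or.inr rfl, hbi ▸ hbM⟩)
                (memU1.2 ⟨Or.inl hyL, hyM⟩) hij hjy
        · have hbk : b ≠ k := by omega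
          have hbL : b ∈ L := by
            rcases hbmem with h | h | h
            exacts [h, absurd h hbi, absurd h hbk]
          exact Q_k L j k M hjL hkL hjk (by omega) Gjk h2 hjM b b'
            (memU1.2 ⟨Or.inl hbL, hbM⟩) (memU1.2 ⟨Or.inr hb'k, hb'M⟩) hbj hjb'
      · have hb'i : b' ≠ i := by omega
        have hbk : b ≠ k := by omega
        have hb'L : b' ∈ L := by
          rcases hb'mem with h | h | h
          exacts [h, absurd h hb'i, absurd h hb'k]
        have hbLi : b ∈ L ∨ b = i := by
          rcases hbmem with h | h | h
          exacts [Or.inl h, Or.inr h, absurd h hbk]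
        exact Q_i L i j M hiL hjL hij (by omega) Gij h1 hjM b b'
          (memU1.2 ⟨hbLi, hbM⟩) (memU1.2 ⟨Or.inl hb'L, hb'M⟩) hbj hjb'
    · -- t ≠ j
      by_cases hc1 : b ≠ k ∧ b' ≠ k
      · have hbm : b ∈ L ∨ b = i ∨ b = j := by
          rcases hbmem with h | h | h
          exacts [Or.inl h, Or.inr (Or.inl h), absurd h hc1.1]
        have hb'm : b' ∈ L ∨ b' = i ∨ b' = j := by
          rcases hb'mem with h | h | h
          exacts [Or.inl h, Or.inr (Or.inl h), absurd h hc1.2]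
        exact Gij b (memU2.2 ⟨hbm, hbM⟩) t (memD2.2 ⟨htM, htL, hti, htj⟩)
          b' (memU2.2 ⟨hb'm, hb'M⟩) hbt htb'
      · by_cases hc2 : b ≠ i ∧ b' ≠ i
        · have hbm : b ∈ L ∨ b = j ∨ b = k := by
            rcases hbmem with h | h | h
            exacts [Or.inl h, absurd h hc2.1, Or.inr (Or.inr h)]
          have hb'm : b' ∈ L ∨ b' = j ∨ b' = k := by
            rcases hb'mem with h | h | h
            exacts [Or.inl h, absurd h hc2.2, Or.inr (Or.inr h)]
          exact Gjk b (memU2.2 ⟨hbm, hbM⟩) t (memD2.2 ⟨htM, htL, htj, htk⟩)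
            b' (memU2.2 ⟨hb'm, hb'M⟩) hbt htb'
        · push_neg at hc1 hc2
          have hbb' : b = i ∧ b' = k := by
            by_cases hbk : b = k
            · have hb'i : b' = i := hc2 (by omega)
              omega
            · have hb'k := hc1 hbk
              by_cases hbi : b = i
              · exact ⟨hbi, hb'k⟩
              · have hb'i := hc2 hbi
                omega
          obtain ⟨hbi, hb'k⟩ := hbb'
          have hiM : i ∉ M := hbi ▸ hbM
          have hkM : k ∉ M := hb'k ▸ hb'M
          have hit : i < t := by omega
          have htk' : t < k := by omega
          have upij : ∀ β ∈ (L ∪ {i, j}) \ M, ¬ t < β := by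
            intro β hβ hlt
            exact Gij i (memU2.2 ⟨Or.inr (Or.inl rfl), hiM⟩)
              t (memD2.2 ⟨htM, htL, hti, htj⟩) β hβ hit hlt
          have lojk : ∀ β ∈ (L ∪ {j, k}) \ M, ¬ β < t := by
            intro β hβ hlt
            exact Gjk β hβ t (memD2.2 ⟨htM, htL, htj, htk⟩)
              k (memU2.2 ⟨Or.inr (Or.inr rfl), hkM⟩) hlt htk'
          have hLM : ∀ y ∈ L, y ∈ M := by
            intro y hy
            by_contra hyM
            have u1 := upij y (memU2.2 ⟨Or.inl hy, hyM⟩)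
            have u2 := lojk y (memU2.2 ⟨Or.inl hy, hyM⟩)
            have : y = t := by omega
            exact hyM (this ▸ htM)
          have hjM : j ∈ M := by
            by_contra hjM
            have u1 := upij j (memU2.2 ⟨Or.inr (Or.inr rfl), hjM⟩)
            have u2 := lojk j (memU2.2 ⟨Or.inr (Or.inl rfl), hjM⟩)
            exact htj (by omega)
          have hq0 : (L \ M).card = 0 := by
            rw [Finset.card_eq_zero, Finset.eq_empty_iff_forall_notMem]
            intro y hy
            obtain ⟨hy1, hy2⟩ := Finset.mem_sdiff.1 hy
            exact hy2 (hLM y hy1)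
          have hp2 : 2 ≤ (M \ L).card := by
            have hsub : ({t, j} : Finset ℕ) ⊆ M \ L := by
              intro v hv
              rcases Finset.mem_insert.1 hv with h | h
              · subst h; exact Finset.mem_sdiff.2 ⟨htM, htL⟩
              · rw [Finset.mem_singleton.1 h]; exact Finset.mem_sdiff.2 ⟨hjM, hjL⟩
            calc 2 = ({t, j} : Finset ℕ).card := (Finset.card_pair htj).symm
              _ ≤ (M \ L).card := Finset.card_le_card hsub
          have hbal := card_balance M L
          omega

lemma key_lowering (L : Finset ℕ) (i j k : ℕ) (M : Finset ℕ)
    (hiL : i ∉ L) (hjL : j ∉ L) (hkL : k ∉ L) (hij : i < j) (hjk : j < k)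
    (hMne : M ≠ L ∪ {i, k})
    (h1 : WeaklySeparated M (L ∪ {i})) (h2 : WeaklySeparated M (L ∪ {k}))
    (h3 : WeaklySeparated M (L ∪ {i, j})) (h4 : WeaklySeparated M (L ∪ {j, k}))
    (h5 : WeaklySeparated M (L ∪ {i, k})) :
    WeaklySeparated M (L ∪ {j}) := by
  have hcj : (L ∪ {j}).card = L.card + 1 := card1 hjL
  have hci : (L ∪ {i}).card = L.card + 1 := card1 hiL
  have hck : (L ∪ {k}).card = L.card + 1 := card1 hkL
  have hcij : (L ∪ {i, j}).card = L.card + 2 := card2 hiL hjL (by omega)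
  have hcjk : (L ∪ {j, k}).card = L.card + 2 := card2 hjL hkL (by omega)
  rw [ws_iff]
  by_cases hm : L.card + 2 ≤ M.card
  · left
    refine ⟨by omega, ?_⟩
    have Hi : NoMid (M \ (L ∪ {i})) ((L ∪ {i}) \ M) := by
      rcases (ws_iff _ _).1 h1 with ⟨hc, H⟩ | ⟨hc, H⟩
      · exact H
      · omega
    have Hk : NoMid (M \ (L ∪ {k})) ((L ∪ {k}) \ M) := by
      rcases (ws_iff _ _).1 h2 with ⟨hc, H⟩ | ⟨hc, H⟩
      · exact H
      · omega
    intro a ha y hy a' ha' hay hya'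
    obtain ⟨haM, haL, haj⟩ := memD1.1 ha
    obtain ⟨ha'M, ha'L, ha'j⟩ := memD1.1 ha'
    obtain ⟨hymem, hyM⟩ := memU1.1 hy
    rcases hymem with hyL | hyj
    · -- y ∈ L
      by_cases hc1 : a ≠ i ∧ a' ≠ i
      · exact Hi a (memD1.2 ⟨haM, haL, hc1.1⟩) y (memU1.2 ⟨Or.inl hyL, hyM⟩)
          a' (memD1.2 ⟨ha'M, ha'L, hc1.2⟩) hay hya'
      · by_cases hc2 : a ≠ k ∧ a' ≠ k
        · exact Hk a (memD1.2 ⟨haM, haL, hc2.1⟩) y (memU1.2 ⟨Or.inl hyL, hyM⟩)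
            a' (memD1.2 ⟨ha'M, ha'L, hc2.2⟩) hay hya'
        · push_neg at hc1 hc2
          have hac : a = i ∧ a' = k := by
            by_cases hai : a = i
            · by_cases ha'k : a' = k
              · exact ⟨hai, ha'k⟩
              · exact absurd (hc2 (by omega)) ha'k
            · have ha'i := hc1 hai
              have ha'k := hc2 (by omega)
              omega
          obtain ⟨hai, ha'k⟩ := hac
          have hiMm : i ∈ M := hai ▸ haM
          have hkMm : k ∈ M := ha'k ▸ ha'M
          have hiy : i < y := by omega
          have hyk : y < k := by omega
          have hsub : ∀ u ∈ M \ L, u = i ∨ u = k := by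
            intro u hu
            obtain ⟨huM, huL⟩ := Finset.mem_sdiff.1 hu
            by_contra hcon
            push_neg at hcon
            obtain ⟨hui, huk⟩ := hcon
            have huy : u ≠ y := fun h => hyM (h ▸ huM)
            rcases Nat.lt_or_ge u y with h | h
            · exact Hi u (memD1.2 ⟨huM, huL, hui⟩) y (memU1.2 ⟨Or.inl hyL, hyM⟩)
                k (memD1.2 ⟨hkMm, hkL, by omega⟩) h hyk
            · have hyu : y < u := by omega
              exact Hk i (memD1.2 ⟨hiMm, hiL, by omega⟩) y (memU1.2 ⟨Or.inl hyL, hyM⟩)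
                u (memD1.2 ⟨huM, huL, huk⟩) hiy hyu
          have hp2 : (M \ L).card ≤ 2 := by
            have hss : M \ L ⊆ ({i, k} : Finset ℕ) := by
              intro u hu
              rcases hsub u hu with h | h <;> simp [h]
            calc (M \ L).card ≤ ({i, k} : Finset ℕ).card := Finset.card_le_card hss
              _ = 2 := Finset.card_pair (by omega)
          have hq1 : 1 ≤ (L \ M).card := by
            have : y ∈ L \ M := Finset.mem_sdiff.2 ⟨hyL, hyM⟩
            exact Finset.card_pos.2 ⟨y, this⟩
          have hbal := card_balance M L
          omega
    · -- y = j
      have hjM : j ∉ M := hyj ▸ hyM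
      have haj' : a < j := by omega
      have hja' : j < a' := by omega
      by_cases hai : a = i
      · by_cases ha'k : a' = k
        · -- hard case: a = i, a' = k, both in M, j ∉ M
          have hiMm : i ∈ M := hai ▸ haM
          have hkMm : k ∈ M := ha'k ▸ ha'M
          by_cases hMX : ∀ u ∈ M, u ∈ L ∨ u = i ∨ u = k
          · have hp2 : (M \ L).card ≤ 2 := by
              have hss : M \ L ⊆ ({i, k} : Finset ℕ) := by
                intro u hu
                obtain ⟨huM, huL⟩ := Finset.mem_sdiff.1 hu
                rcases hMX u huM with h | h | h
                · exact absurd h huL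
                · simp [h]
                · simp [h]
              calc (M \ L).card ≤ ({i, k} : Finset ℕ).card := Finset.card_le_card hss
                _ = 2 := Finset.card_pair (by omega)
            have hbal := card_balance M L
            have hq0 : (L \ M).card = 0 := by omega
            apply hMne
            apply Finset.Subset.antisymm
            · intro u hu
              rcases hMX u hu with h | h | h
              · exact Finset.mem_union_left _ h
              · exact Finset.mem_union_right _ (by simp [h])
              · exact Finset.mem_union_right _ (by simp [h])
            · apply Finset.union_subset
              · intro u hu
                by_contra huM
                have hmem : u ∈ L \ M := Finset.mem_sdiff.2 ⟨hu, huM⟩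
                rw [Finset.card_eq_zero] at hq0
                simp [hq0] at hmem
              · intro u hu
                rcases Finset.mem_insert.1 hu with h | h
                · exact h ▸ hiMm
                · exact (Finset.mem_singleton.1 h) ▸ hkMm
          · push_neg at hMX
            obtain ⟨u, huM, huL, hui, huk⟩ := hMX
            have huj : u ≠ j := fun h => hjM (h ▸ huM)
            rcases Nat.lt_or_ge u j with h | h
            · exact P_ij L i j M hiL hjL hij hm Hi h3 hjM u k
                (memD2.2 ⟨huM, huL, hui, huj⟩)
                (memD2.2 ⟨hkMm, hkL, by omega, by omega⟩) h hjk
            · have hju : j < u := by omega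
              exact P_jk L j k M hjL hkL hjk hm Hk h4 hjM i u
                (memD2.2 ⟨hiMm, hiL, by omega, by omega⟩)
                (memD2.2 ⟨huM, huL, huj, huk⟩) hij hju
        · exact P_jk L j k M hjL hkL hjk hm Hk h4 hjM a a'
            (memD2.2 ⟨haM, haL, by omega, by omega⟩)
            (memD2.2 ⟨ha'M, ha'L, by omega, ha'k⟩) haj' hja'
      · exact P_ij L i j M hiL hjL hij hm Hi h3 hjM a a'
          (memD2.2 ⟨haM, haL, hai, by omega⟩)
          (memD2.2 ⟨ha'M, ha'L, by omega, by omega⟩) haj' hja'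
  · right
    refine ⟨by omega, ?_⟩
    have Gij : NoMid ((L ∪ {i, j}) \ M) (M \ (L ∪ {i, j})) := by
      rcases (ws_iff _ _).1 h3 with ⟨hc, H⟩ | ⟨hc, H⟩
      · omega
      · exact H
    have Gjk : NoMid ((L ∪ {j, k}) \ M) (M \ (L ∪ {j, k})) := by
      rcases (ws_iff _ _).1 h4 with ⟨hc, H⟩ | ⟨hc, H⟩
      · omega
      · exact H
    intro b hb a ha b' hb' hba hab'
    obtain ⟨hbmem, hbM⟩ := memU1.1 hb
    obtain ⟨hb'mem, hb'M⟩ := memU1.1 hb'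
    obtain ⟨haM, haL, haj⟩ := memD1.1 ha
    by_cases hai : a = i
    · exact Gjk b (memU2.2 ⟨by tauto, hbM⟩) a (memD2.2 ⟨haM, haL, haj, by omega⟩)
        b' (memU2.2 ⟨by tauto, hb'M⟩) hba hab'
    · exact Gij b (memU2.2 ⟨by tauto, hbM⟩) a (memD2.2 ⟨haM, haL, hai, haj⟩)
        b' (memU2.2 ⟨by tauto, hb'M⟩) hba hab'

/-- **Weak raising and lowering flips preserve weak separation** (Leclerc–Zelevinsky).
Let `L ⊆ [n]` and `i < j < k` in `[n] \ L`.
(Raising) If a weakly separated collection `S` contains `Lj` and its four witnesses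
`Li`, `Lk`, `Lij`, `Ljk`, then `(S \ {Lj}) ∪ {Lik}` is weakly separated.
(Lowering) If a weakly separated collection `S` contains `Lik` together with
`Li`, `Lk`, `Lij`, `Ljk`, then `(S \ {Lik}) ∪ {Lj}` is weakly separated. -/
theorem weak_flips_preserve_weak_separation
    (n : ℕ) (hn : 2 ≤ n) (L : Finset ℕ) (hL : L ⊆ Finset.Icc 1 n)
    (i j k : ℕ)
    (hi : i ∈ Finset.Icc 1 n) (hj : j ∈ Finset.Icc 1 n) (hk : k ∈ Finset.Icc 1 n)
    (hiL : i ∉ L) (hjL : j ∉ L) (hkL : k ∉ L)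
    (hij : i < j) (hjk : j < k) :
    (∀ S : Set (Finset ℕ), WSColl S →
      L ∪ {j} ∈ S → L ∪ {i} ∈ S → L ∪ {k} ∈ S → L ∪ {i, j} ∈ S → L ∪ {j, k} ∈ S →
      WSColl ((S \ {L ∪ {j}}) ∪ {L ∪ {i, k}})) ∧
    (∀ S : Set (Finset ℕ), WSColl S →
      L ∪ {i, k} ∈ S → L ∪ {i} ∈ S → L ∪ {k} ∈ S → L ∪ {i, j} ∈ S → L ∪ {j, k} ∈ S →
      WSColl ((S \ {L ∪ {i, k}}) ∪ {L ∪ {j}})) := by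
  constructor
  · intro S hS h0 hi' hk' hij' hjk' I hI J hJ
    have key : ∀ M ∈ S, M ≠ L ∪ {j} → WeaklySeparated M (L ∪ {i, k}) := by
      intro M hM hne
      exact key_raising L i j k M hiL hjL hkL hij hjk hne
        (hS M hM _ hi') (hS M hM _ hk') (hS M hM _ hij') (hS M hM _ hjk') (hS M hM _ h0)
    simp only [Set.mem_union, Set.mem_diff, Set.mem_singleton_iff] at hI hJ
    rcases hI with ⟨hI1, hI2⟩ | hI <;> rcases hJ with ⟨hJ1, hJ2⟩ | hJ
    · exact hS I hI1 J hJ1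
    · exact hJ ▸ key I hI1 hI2
    · exact hI ▸ ws_symm (key J hJ1 hJ2)
    · exact hI ▸ hJ ▸ ws_refl _
  · intro S hS h0 hi' hk' hij' hjk' I hI J hJ
    have key : ∀ M ∈ S, M ≠ L ∪ {i, k} → WeaklySeparated M (L ∪ {j}) := by
      intro M hM hne
      exact key_lowering L i j k M hiL hjL hkL hij hjk hne
        (hS M hM _ hi') (hS M hM _ hk') (hS M hM _ hij') (hS M hM _ hjk') (hS M hM _ h0)
    simp only [Set.mem_union, Set.mem_diff, Set.mem_singleton_iff] at hI hJ
    rcases hI with ⟨hI1, hI2⟩ | hI <;> rcases hJ with ⟨hJ1, hJ2⟩ | hJ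
    · exact hS I hI1 J hJ1
    · exact hJ ▸ key I hI1 hI2
    · exact hI ▸ ws_symm (key J hJ1 hJ2)
    · exact hI ▸ hJ ▸ ws_refl _
end

section
/- Let I, J ⊆ [n] be nonempty. Then h(I, J) + h(J, I) ≥ |I ∩ J| + min(|I|, |J|), and equality holds if and only if I and J are weakly separated. -/
/-- `S(I,d)`: the set of the `d` smallest elements of `I`. -/
def smallSet (I : Finset ℕ) (d : ℕ) : Finset ℕ := ((Finset.sort I (· ≤ ·)).take d).toFinset

/-- `E(I,d)`: the set of the `d` largest elements of `I`. -/
def largeSet (I : Finset ℕ) (d : ℕ) : Finset ℕ :=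
  ((Finset.sort I (· ≤ ·)).drop (I.card - d)).toFinset

/-- `A ⪯ B`: the sets have the same cardinality `d` and for each `1 ≤ s ≤ d`
the `s`-th smallest element of `A` is at most the `s`-th smallest element of `B`. -/
def PrecLE (A B : Finset ℕ) : Prop :=
  A.card = B.card ∧
  ∀ s < A.card, (Finset.sort A (· ≤ ·)).getD s 0 ≤ (Finset.sort B (· ≤ ·)).getD s 0

/-- `h(I,J) = max{ d : 0 ≤ d ≤ min(|I|,|J|) and S(I,d) ⪯ E(J,d) }`.
In the paper this equals `dim Hom_D(M_I, M_J)` for rank one modules over the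
Auslander algebra `D` of `ℂ[t]/(tⁿ)`. -/
noncomputable def homDim (I J : Finset ℕ) : ℕ :=
  sSup {d | d ≤ min I.card J.card ∧ PrecLE (smallSet I d) (largeSet J d)}


lemma sort_toFinset_of_sorted {u : List ℕ} (hu : u.Pairwise (· < ·)) :
    Finset.sort u.toFinset (· ≤ ·) = u := by
  have hnd : u.Nodup := hu.nodup
  apply List.Perm.eq_of_pairwise' (Finset.pairwise_sort _ _) (hu.imp le_of_lt) ?_
  rw [← Multiset.coe_eq_coe, Finset.sort_eq]
  rw [List.toFinset, Multiset.toFinset_val]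
  exact Multiset.dedup_eq_self.2 (by simpa using hnd)

lemma take_sorted_lt {u : List ℕ} (hu : u.Pairwise (· < ·)) (d : ℕ) :
    (u.take d).Pairwise (· < ·) := List.Pairwise.sublist (List.take_sublist d u) hu

lemma drop_sorted_lt {u : List ℕ} (hu : u.Pairwise (· < ·)) (d : ℕ) :
    (u.drop d).Pairwise (· < ·) := List.Pairwise.sublist (List.drop_sublist d u) hu

lemma sort_smallSet (I : Finset ℕ) (d : ℕ) :
    Finset.sort (smallSet I d) (· ≤ ·) = (Finset.sort I (· ≤ ·)).take d :=
  sort_toFinset_of_sorted (take_sorted_lt ((Finset.sortedLT_sort I).pairwise) d)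

lemma sort_largeSet (J : Finset ℕ) (d : ℕ) :
    Finset.sort (largeSet J d) (· ≤ ·) = (Finset.sort J (· ≤ ·)).drop (J.card - d) :=
  sort_toFinset_of_sorted (drop_sorted_lt ((Finset.sortedLT_sort J).pairwise) _)

lemma card_smallSet (I : Finset ℕ) {d : ℕ} (hd : d ≤ I.card) : (smallSet I d).card = d := by
  rw [← Finset.length_sort (r := (· ≤ ·)), sort_smallSet, List.length_take, Finset.length_sort]
  omega

lemma card_largeSet (J : Finset ℕ) {d : ℕ} (hd : d ≤ J.card) : (largeSet J d).card = d := by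
  rw [← Finset.length_sort (r := (· ≤ ·)), sort_largeSet, List.length_drop, Finset.length_sort]
  omega
def cnt (S : Finset ℕ) (x : ℕ) : ℕ := (S.filter (· ≤ x)).card

lemma cnt_sort (S : Finset ℕ) (x : ℕ) :
    ((Finset.sort S (· ≤ ·)).filter (fun a => a ≤ x)).length = cnt S x := by
  unfold cnt
  rw [Finset.card_def, Finset.filter_val, ← Finset.sort_eq S (· ≤ ·),
    Multiset.filter_coe, Multiset.coe_card]

lemma sorted_le_iff {u : List ℕ} (hu : u.Pairwise (· < ·)) {s : ℕ} (hs : s < u.length) (x : ℕ) :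
    u[s] ≤ x ↔ s < (u.filter (fun a => a ≤ x)).length := by
  have mono : ∀ i j : ℕ, (hi : i < u.length) → (hj : j < u.length) → i ≤ j → u[i] ≤ u[j] := by
    intro i j hi hj hij
    rcases eq_or_lt_of_le hij with rfl | h
    · exact le_rfl
    · exact le_of_lt (List.Pairwise.rel_get_of_lt hu (by simpa using h))
  rw [← List.countP_eq_length_filter]
  constructor
  · intro h
    have h1 : (u.take (s+1)).countP (fun a => decide (a ≤ x)) = s+1 := by
      rw [List.countP_eq_length.2, List.length_take]
      · omega
      · intro a ha
        obtain ⟨i, hi, rfl⟩ := List.mem_iff_getElem.1 ha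
        rw [List.getElem_take]
        have hilen : i < u.length := lt_of_lt_of_le hi (by rw [List.length_take]; omega) |>.trans_le (le_refl _)
        simp only [decide_eq_true_eq]
        exact le_trans (mono i s (by simpa [List.length_take] using (by rw [List.length_take] at hi; omega : i < u.length)) hs (by rw [List.length_take] at hi; omega)) h
    have := List.Sublist.countP_le (p := fun a => decide (a ≤ x)) (List.take_sublist (s+1) u)
    omega
  · intro h
    by_contra hc
    push_neg at hc
    have hsplit : u.countP (fun a => decide (a ≤ x)) =
        (u.take s).countP (fun a => decide (a ≤ x)) + (u.drop s).countP (fun a => decide (a ≤ x)) := by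
      conv_lhs => rw [← List.take_append_drop s u]
      rw [List.countP_append]
    have hdrop : (u.drop s).countP (fun a => decide (a ≤ x)) = 0 := by
      rw [List.countP_eq_zero]
      intro a ha
      obtain ⟨i, hi, rfl⟩ := List.mem_iff_getElem.1 ha
      rw [List.getElem_drop]
      simp only [decide_eq_true_eq, not_le]
      have : s + i < u.length := by rw [List.length_drop] at hi; omega
      exact lt_of_lt_of_le hc (mono s (s+i) hs this (by omega))
    have htake := (u.take s).countP_le_length (p := fun a => decide (a ≤ x))
    rw [List.length_take] at htake
    omega

lemma cnt_le_card (S : Finset ℕ) (x : ℕ) : cnt S x ≤ S.card := Finset.card_filter_le _ _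

lemma precLE_iff_cnt (I J : Finset ℕ) {d : ℕ} (hdI : d ≤ I.card) (hdJ : d ≤ J.card) :
    PrecLE (smallSet I d) (largeSet J d) ↔ ∀ x : ℕ, d + cnt J x ≤ cnt I x + J.card := by
  set u := Finset.sort I (· ≤ ·) with hu_def
  set v := Finset.sort J (· ≤ ·) with hv_def
  have hu : u.Pairwise (· < ·) := (Finset.sortedLT_sort I).pairwise
  have hv : v.Pairwise (· < ·) := (Finset.sortedLT_sort J).pairwise
  have hlu : u.length = I.card := Finset.length_sort _
  have hlv : v.length = J.card := Finset.length_sort _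
  have hlu2 : (Finset.sort I (· ≤ ·)).length = I.card := Finset.length_sort _
  have hlv2 : (Finset.sort J (· ≤ ·)).length = J.card := Finset.length_sort _
  set l := J.card with hl_def
  have hstep : PrecLE (smallSet I d) (largeSet J d) ↔
      ∀ s : ℕ, (hs : s < d) → u[s]'(by omega) ≤ v[l - d + s]'(by omega) := by
    constructor
    · rintro ⟨-, h2⟩ s hs
      have hs' : s < (smallSet I d).card := by rw [card_smallSet I hdI]; exact hs
      have := h2 s hs'
      rw [sort_smallSet, sort_largeSet] at this
      rw [List.getD_eq_getElem _ _ (by rw [List.length_take]; omega),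
          List.getD_eq_getElem _ _ (by rw [List.length_drop]; omega)] at this
      rw [List.getElem_take, List.getElem_drop] at this
      exact this
    · intro h
      constructor
      · rw [card_smallSet I hdI, card_largeSet J hdJ]
      · intro s hs
        rw [card_smallSet I hdI] at hs
        rw [sort_smallSet, sort_largeSet,
          List.getD_eq_getElem _ _ (by rw [List.length_take]; omega),
          List.getD_eq_getElem _ _ (by rw [List.length_drop]; omega),
          List.getElem_take, List.getElem_drop]
        exact h s hs
  rw [hstep]
  constructor
  · intro h x
    have hb := cnt_le_card J x
    have ha := cnt_le_card I x
    by_cases hbl : cnt J x ≤ l - d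
    · omega
    · push_neg at hbl
      set b := cnt J x with hb_def
      set s := b - (l - d) - 1 with hs_def
      have hsd : s < d := by omega
      have hidx : l - d + s < v.length := by omega
      have hvx : v[l - d + s]'hidx ≤ x := by
        rw [sorted_le_iff hv hidx x, cnt_sort]
        omega
      have hux : u[s]'(by omega) ≤ x := le_trans (h s hsd) hvx
      have := (sorted_le_iff hu (show s < u.length by omega) x).1 hux
      rw [cnt_sort] at this
      omega
  · intro h s hs
    have hidx : l - d + s < v.length := by omega
    set x := v[l - d + s]'hidx with hx_def
    have hbx : l - d + s < cnt J x := by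
      rw [← cnt_sort, ← sorted_le_iff hv hidx x]
    have hax := h x
    have : s < cnt I x := by omega
    rw [← cnt_sort, ← sorted_le_iff hu (show s < u.length by omega) x] at this
    exact this

lemma cnt_zero_of_subset {n : ℕ} {S : Finset ℕ} (hS : S ⊆ Finset.Icc 1 n) : cnt S 0 = 0 := by
  unfold cnt
  rw [Finset.card_eq_zero, Finset.filter_eq_empty_iff]
  intro a ha
  have := hS ha; rw [Finset.mem_Icc] at this; omega

lemma cnt_eq_card_of_ge {n : ℕ} {S : Finset ℕ} (hS : S ⊆ Finset.Icc 1 n) {x : ℕ} (hx : n ≤ x) :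
    cnt S x = S.card := by
  unfold cnt
  rw [Finset.filter_eq_self.2]
  intro a ha
  have := hS ha; rw [Finset.mem_Icc] at this; omega

lemma homDim_eq (n : ℕ) (I J : Finset ℕ) (hI : I ⊆ Finset.Icc 1 n) (hJ : J ⊆ Finset.Icc 1 n) :
    homDim I J = (Finset.range (n+1)).inf' (by simp) (fun x => cnt I x + (J.card - cnt J x)) := by
  have hne : (Finset.range (n+1)).Nonempty := ⟨0, by simp⟩
  set m := (Finset.range (n+1)).inf' hne (fun x => cnt I x + (J.card - cnt J x)) with hm
  have key : ∀ d : ℕ, (d ≤ min I.card J.card ∧ PrecLE (smallSet I d) (largeSet J d)) ↔ d ≤ m := by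
    intro d
    constructor
    · rintro ⟨hd, hp⟩
      rw [precLE_iff_cnt I J (le_trans hd (min_le_left _ _)) (le_trans hd (min_le_right _ _))] at hp
      rw [hm, Finset.le_inf'_iff]
      intro x hx
      have h1 := hp x
      have h2 := cnt_le_card J x
      omega
    · intro hd
      have hall : ∀ x : ℕ, d + cnt J x ≤ cnt I x + J.card := by
        intro x
        rcases le_or_gt x n with hx | hx
        · have h0 : d ≤ cnt I x + (J.card - cnt J x) :=
            le_trans hd (by rw [hm]; exact Finset.inf'_le _ (by simp; omega))
          have := cnt_le_card J x
          omega
        · have h1 : cnt I x = I.card := cnt_eq_card_of_ge hI (le_of_lt hx)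
          have h2 : cnt J x = J.card := cnt_eq_card_of_ge hJ (le_of_lt hx)
          have hn : d ≤ cnt I n + (J.card - cnt J n) :=
            le_trans hd (by rw [hm]; exact Finset.inf'_le _ (by simp))
          have h3 : cnt I n = I.card := cnt_eq_card_of_ge hI le_rfl
          have h4 : cnt J n = J.card := cnt_eq_card_of_ge hJ le_rfl
          have := cnt_le_card J n
          omega
      have hdk : d ≤ I.card := by
        have := hall n
        rw [cnt_eq_card_of_ge hI le_rfl, cnt_eq_card_of_ge hJ le_rfl] at this; omega
      have hdl : d ≤ J.card := by
        have := hall 0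
        rw [cnt_zero_of_subset hI] at this; omega
      exact ⟨le_min hdk hdl, (precLE_iff_cnt I J hdk hdl).2 hall⟩
  have hset : {d | d ≤ min I.card J.card ∧ PrecLE (smallSet I d) (largeSet J d)} = Set.Iic m := by
    ext d; exact (key d)
  rw [homDim, hset, csSup_Iic]

lemma cnt_split (S : Finset ℕ) {x y : ℕ} (hxy : x ≤ y) :
    cnt S y = cnt S x + (S.filter (fun a => x < a ∧ a ≤ y)).card := by
  unfold cnt
  rw [← Finset.card_union_of_disjoint (by
    rw [Finset.disjoint_left]; intro a ha hb
    simp only [Finset.mem_filter] at ha hb; omega)]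
  congr 1
  rw [Finset.filter_union_right]
  apply Finset.filter_congr
  intro a _
  constructor <;> intro h <;> omega

lemma cnt_decomp (I J : Finset ℕ) (x : ℕ) : cnt I x = cnt (I \ J) x + cnt (I ∩ J) x := by
  unfold cnt
  rw [← Finset.card_union_of_disjoint
    (Finset.disjoint_filter_filter (Finset.disjoint_sdiff_inter I J)),
    ← Finset.filter_union, Finset.sdiff_union_inter]

lemma ws_half {P Q : Finset ℕ} {x y : ℕ} (hxy : x ≤ y)
    (hP : P.filter (fun a => x < a ∧ a ≤ y) = P)
    (hQ : Q.filter (fun a => x < a ∧ a ≤ y) = ∅) :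
    ∃ Q' Q'' : Finset ℕ, Disjoint Q' Q'' ∧ Q' ∪ Q'' = Q ∧ allLt Q' P ∧ allLt P Q'' := by
  refine ⟨Q.filter (· ≤ x), Q.filter (fun a => y < a), ?_, ?_, ?_, ?_⟩
  · rw [Finset.disjoint_left]; intro a ha hb
    simp only [Finset.mem_filter] at ha hb; omega
  · rw [Finset.filter_union_right]
    apply Finset.filter_eq_self.2
    intro a ha
    have h1 : a ∉ Q.filter (fun a => x < a ∧ a ≤ y) := by rw [hQ]; simp
    simp only [Finset.mem_filter, not_and] at h1
    have := h1 ha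
    omega
  · intro a ha b hb
    simp only [Finset.mem_filter] at ha
    have hb' : b ∈ P.filter (fun a => x < a ∧ a ≤ y) := by rw [hP]; exact hb
    simp only [Finset.mem_filter] at hb'
    omega
  · intro a ha b hb
    simp only [Finset.mem_filter] at hb
    have ha' : a ∈ P.filter (fun a => x < a ∧ a ≤ y) := by rw [hP]; exact ha
    simp only [Finset.mem_filter] at ha'
    omega

lemma cast_inf' {X : Finset ℕ} (hX : X.Nonempty) (g : ℕ → ℕ) :
    ((X.inf' hX g : ℕ) : ℤ) = X.inf' hX (fun x => (g x : ℤ)) := by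
  obtain ⟨x0, hx0, hval0⟩ := Finset.exists_mem_eq_inf' hX (fun x => (g x : ℤ))
  obtain ⟨x1, hx1, hval1⟩ := Finset.exists_mem_eq_inf' hX g
  apply le_antisymm
  · rw [hval0]
    exact_mod_cast Finset.inf'_le g hx0
  · rw [hval1]
    exact Finset.inf'_le _ hx1

lemma inf'_const_add {X : Finset ℕ} (hX : X.Nonempty) (c : ℤ) (f : ℕ → ℤ) :
    X.inf' hX (fun x => c + f x) = c + X.inf' hX f := by
  obtain ⟨x0, hx0, hval0⟩ := Finset.exists_mem_eq_inf' hX f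
  obtain ⟨x1, hx1, hval1⟩ := Finset.exists_mem_eq_inf' hX (fun x => c + f x)
  apply le_antisymm
  · rw [hval0]
    exact Finset.inf'_le _ hx0
  · rw [hval1]
    exact (add_le_add_iff_left c).2 (Finset.inf'_le _ hx1)

lemma inf'_const_sub {X : Finset ℕ} (hX : X.Nonempty) (c : ℤ) (f : ℕ → ℤ) :
    X.inf' hX (fun x => c - f x) = c - X.sup' hX f := by
  obtain ⟨x0, hx0, hval0⟩ := Finset.exists_mem_eq_sup' hX f
  obtain ⟨x1, hx1, hval1⟩ := Finset.exists_mem_eq_inf' hX (fun x => c - f x)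
  apply le_antisymm
  · calc X.inf' hX (fun x => c - f x) ≤ c - f x0 := Finset.inf'_le _ hx0
    _ = c - X.sup' hX f := by rw [hval0]
  · rw [hval1]
    exact sub_le_sub_left (Finset.le_sup' _ hx1) c


/-- **Weak separation via hom dimensions.**  For nonempty `I, J ⊆ [n]`,
`h(I,J) + h(J,I) ≥ |I∩J| + min(|I|,|J|)`, with equality if and only if `I` and `J`
are weakly separated.  (Equivalently, `ext¹(M_I, M_J) = 0` iff `I`, `J` are weakly
separated.) -/
theorem weakly_separated_iff_homDim (n : ℕ) (I J : Finset ℕ)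
    (hI : I ⊆ Finset.Icc 1 n) (hJ : J ⊆ Finset.Icc 1 n)
    (hI0 : I.Nonempty) (hJ0 : J.Nonempty) :
    (I ∩ J).card + min I.card J.card ≤ homDim I J + homDim J I ∧
    (homDim I J + homDim J I = (I ∩ J).card + min I.card J.card ↔
      WeaklySeparated I J) := by
  classical
  have hXne : (Finset.range (n+1)).Nonempty := ⟨0, by simp⟩
  set X := Finset.range (n+1) with hX
  set F : ℕ → ℤ := fun x => (cnt I x : ℤ) - cnt J x with hFdef
  set A := X.sup' hXne F with hA
  set B := X.inf' hXne F with hB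
  have hkP : (I ∩ J).card + (I \ J).card = I.card := Finset.card_inter_add_card_sdiff I J
  have hlQ : (I ∩ J).card + (J \ I).card = J.card := by
    rw [Finset.inter_comm]; exact Finset.card_inter_add_card_sdiff J I
  have hkP' : ((I ∩ J).card : ℤ) + ((I \ J).card : ℤ) = (I.card : ℤ) := by exact_mod_cast hkP
  have hlQ' : ((I ∩ J).card : ℤ) + ((J \ I).card : ℤ) = (J.card : ℤ) := by exact_mod_cast hlQ
  have hcntJ : ∀ x, cnt J x ≤ J.card := fun x => cnt_le_card J x
  have hcntI : ∀ x, cnt I x ≤ I.card := fun x => cnt_le_card I x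
  -- homDim values
  have h1 : (homDim I J : ℤ) = (J.card : ℤ) + B := by
    rw [homDim_eq n I J hI hJ, cast_inf']
    have e : (fun x => ((cnt I x + (J.card - cnt J x) : ℕ) : ℤ)) = fun x => (J.card : ℤ) + F x := by
      funext x
      have := hcntJ x
      simp only [hFdef]
      push_cast [Nat.cast_sub this]
      ring
    rw [e, inf'_const_add hXne ((J.card : ℤ)) F, hB]
  have h2 : (homDim J I : ℤ) = (I.card : ℤ) - A := by
    rw [homDim_eq n J I hJ hI, cast_inf']
    have e : (fun x => ((cnt J x + (I.card - cnt I x) : ℕ) : ℤ)) = fun x => (I.card : ℤ) - F x := by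
      funext x
      have := hcntI x
      simp only [hFdef]
      push_cast [Nat.cast_sub this]
      ring
    rw [e, inf'_const_sub hXne ((I.card : ℤ)) F, hA]
  have hsum : (homDim I J : ℤ) + (homDim J I : ℤ) = I.card + J.card + (B - A) := by
    rw [h1, h2]; ring
  -- F in terms of P, Q
  have hFPQ : ∀ x, F x = (cnt (I \ J) x : ℤ) - cnt (J \ I) x := by
    intro x
    have e1 := cnt_decomp I J x
    have e2 := cnt_decomp J I x
    have e3 : cnt (J ∩ I) x = cnt (I ∩ J) x := by rw [Finset.inter_comm]
    simp only [hFdef]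
    omega
  have hFdiff : ∀ x y : ℕ, x ≤ y →
      F y - F x = (((I \ J).filter (fun a => x < a ∧ a ≤ y)).card : ℤ)
                - (((J \ I).filter (fun a => x < a ∧ a ≤ y)).card : ℤ) := by
    intro x y hxy
    rw [hFPQ, hFPQ]
    have e1 := cnt_split (I \ J) hxy
    have e2 := cnt_split (J \ I) hxy
    omega
  have reach2 : ∀ x ∈ X, ∀ y ∈ X, F y - F x ≤ A - B := by
    intro x hx y hy
    have hh1 : F y ≤ A := Finset.le_sup' F hy
    have hh2 : B ≤ F x := Finset.inf'_le F hx
    omega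
  -- key inequality
  have key1 : A - B ≤ max (((I \ J).card : ℤ)) (((J \ I).card : ℤ)) := by
    obtain ⟨xM, hxM, hAv⟩ := Finset.exists_mem_eq_sup' hXne F
    obtain ⟨xm, hxm, hBv⟩ := Finset.exists_mem_eq_inf' hXne F
    rcases le_total xm xM with hc | hc
    · have hdiff := hFdiff xm xM hc
      have hle : (((I \ J).filter (fun a => xm < a ∧ a ≤ xM)).card : ℤ) ≤ ((I \ J).card : ℤ) := by
        exact_mod_cast Finset.card_filter_le _ _
      rw [← hAv, ← hBv] at hdiff
      omega
    · have hdiff := hFdiff xM xm hc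
      have hle : (((J \ I).filter (fun a => xM < a ∧ a ≤ xm)).card : ℤ) ≤ ((J \ I).card : ℤ) := by
        exact_mod_cast Finset.card_filter_le _ _
      rw [← hAv, ← hBv] at hdiff
      omega
  -- reaching the bound from a weak-separation split
  have reach : ∀ P' Q' : Finset ℕ, P' ⊆ Finset.Icc 1 n →
      (∃ S T : Finset ℕ, S ∪ T = Q' ∧ allLt S P' ∧ allLt P' T) →
      ∃ x ∈ X, ∃ y ∈ X, x ≤ y ∧ P'.filter (fun a => x < a ∧ a ≤ y) = P'
        ∧ Q'.filter (fun a => x < a ∧ a ≤ y) = ∅ := by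
    rintro P' Q' hP'sub ⟨S, T, hST, hSP, hPT⟩
    rcases P'.eq_empty_or_nonempty with rfl | hP'ne
    · refine ⟨0, by simp [hX], 0, by simp [hX], le_rfl, by simp, ?_⟩
      rw [Finset.filter_eq_empty_iff]
      intro a _
      omega
    · have hy_mem : P'.max' hP'ne ∈ P' := P'.max'_mem hP'ne
      have hx_mem : P'.min' hP'ne ∈ P' := P'.min'_mem hP'ne
      have hyn : P'.max' hP'ne ≤ n := (Finset.mem_Icc.1 (hP'sub hy_mem)).2
      have hx1 : 1 ≤ P'.min' hP'ne := (Finset.mem_Icc.1 (hP'sub hx_mem)).1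
      have hminmax : P'.min' hP'ne ≤ P'.max' hP'ne := P'.min'_le _ hy_mem
      refine ⟨P'.min' hP'ne - 1, ?_, P'.max' hP'ne, ?_, by omega, ?_, ?_⟩
      · simp only [hX, Finset.mem_range]; omega
      · simp only [hX, Finset.mem_range]; omega
      · apply Finset.filter_eq_self.2
        intro a ha
        have hh1 := P'.min'_le a ha
        have hh2 := P'.le_max' a ha
        omega
      · rw [Finset.filter_eq_empty_iff]
        intro a ha
        rw [← hST, Finset.mem_union] at ha
        rcases ha with ha | ha
        · have := hSP a ha _ hx_mem
          omega
        · have := hPT _ hy_mem a ha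
          omega
  constructor
  · -- the inequality
    have : (((I ∩ J).card + min I.card J.card : ℕ) : ℤ) ≤ ((homDim I J + homDim J I : ℕ) : ℤ) := by
      push_cast
      omega
    exact_mod_cast this
  · constructor
    · -- equality → weakly separated
      intro heq
      have heq' : (homDim I J : ℤ) + (homDim J I : ℤ)
          = ((I ∩ J).card : ℤ) + min (I.card : ℤ) (J.card : ℤ) := by
        exact_mod_cast congrArg (Nat.cast : ℕ → ℤ) heq
      have heqZ : A - B = max (((I \ J).card : ℤ)) (((J \ I).card : ℤ)) := by omega
      obtain ⟨xM, hxM, hAv⟩ := Finset.exists_mem_eq_sup' hXne F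
      obtain ⟨xm, hxm, hBv⟩ := Finset.exists_mem_eq_inf' hXne F
      rcases le_total xm xM with hc | hc
      · have hdiff := hFdiff xm xM hc
        rw [← hAv, ← hBv] at hdiff
        have hPfle : ((I \ J).filter (fun a => xm < a ∧ a ≤ xM)).card ≤ (I \ J).card :=
          Finset.card_filter_le _ _
        have hfacts : ((J \ I).filter (fun a => xm < a ∧ a ≤ xM)).card = 0 ∧
            ((I \ J).filter (fun a => xm < a ∧ a ≤ xM)).card = (I \ J).card ∧
            (J \ I).card ≤ (I \ J).card := by
          constructor
          · omega
          · constructor <;> omega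
        have hQfe : (J \ I).filter (fun a => xm < a ∧ a ≤ xM) = ∅ :=
          Finset.card_eq_zero.1 hfacts.1
        have hPfe : (I \ J).filter (fun a => xm < a ∧ a ≤ xM) = I \ J :=
          Finset.eq_of_subset_of_card_le (Finset.filter_subset _ _) (by omega)
        left
        exact ⟨by omega, ws_half hc hPfe hQfe⟩
      · have hdiff := hFdiff xM xm hc
        rw [← hAv, ← hBv] at hdiff
        have hQfle : ((J \ I).filter (fun a => xM < a ∧ a ≤ xm)).card ≤ (J \ I).card :=
          Finset.card_filter_le _ _
        have hfacts : ((I \ J).filter (fun a => xM < a ∧ a ≤ xm)).card = 0 ∧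
            ((J \ I).filter (fun a => xM < a ∧ a ≤ xm)).card = (J \ I).card ∧
            (I \ J).card ≤ (J \ I).card := by
          constructor
          · omega
          · constructor <;> omega
        have hPfe : (I \ J).filter (fun a => xM < a ∧ a ≤ xm) = ∅ :=
          Finset.card_eq_zero.1 hfacts.1
        have hQfe : (J \ I).filter (fun a => xM < a ∧ a ≤ xm) = J \ I :=
          Finset.eq_of_subset_of_card_le (Finset.filter_subset _ _) (by omega)
        right
        exact ⟨by omega, ws_half hc hQfe hPfe⟩
    · -- weakly separated → equality
      intro hws
      have hge : max (((I \ J).card : ℤ)) (((J \ I).card : ℤ)) ≤ A - B := by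
        rcases hws with ⟨hcard, S, T, hdisj, hun, hl1, hl2⟩ | ⟨hcard, S, T, hdisj, hun, hl1, hl2⟩
        · obtain ⟨x, hx, y, hy, hxy, hPeq, hQeq⟩ :=
            reach (I \ J) (J \ I) (fun a ha => hI (Finset.mem_sdiff.1 ha).1) ⟨S, T, hun, hl1, hl2⟩
          have hd := hFdiff x y hxy
          rw [hPeq, hQeq] at hd
          simp only [Finset.card_empty] at hd
          have hr := reach2 x hx y hy
          omega
        · obtain ⟨x, hx, y, hy, hxy, hPeq, hQeq⟩ :=
            reach (J \ I) (I \ J) (fun a ha => hJ (Finset.mem_sdiff.1 ha).1) ⟨S, T, hun, hl1, hl2⟩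
          have hd := hFdiff x y hxy
          rw [hPeq, hQeq] at hd
          simp only [Finset.card_empty] at hd
          have hr := reach2 y hy x hx
          omega
      have hZ : A - B = max (((I \ J).card : ℤ)) (((J \ I).card : ℤ)) := le_antisymm key1 hge
      have : ((homDim I J + homDim J I : ℕ) : ℤ) = (((I ∩ J).card + min I.card J.card : ℕ) : ℤ) := by
        push_cast
        omega
      exact_mod_cast this
end
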